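/- Let k ≡ 2 (mod 4) with 2 ≤ k ≤ v-2, and let T, T' be tournaments on the same vertex set V of size v. If for every k-element subset K of V the number of edges of the boolean sum (T +̇ T') restricted to K is even, then T' = T. -/

import Mathlib

/-- A tournament on `V`: an orientation of the complete graph. -/
structure Tournament (V : Type*) where
  arc : V → V → Bool
  irrefl : ∀ x, arc x x = false
  total : ∀ x y, x ≠ y → arc x y = !arc y x

/-- The boolean sum of two tournaments: the graph whose edges are the pairs on which
the two tournaments disagree. -/
def boolSum {V : Type*} (T T' : Tournament V) : SimpleGraph V where
  Adj x y := x ≠ y ∧ T.arc x y ≠ T'.arc x y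
  symm := by
    constructor
    intro x y ⟨hne, hd⟩
    refine ⟨hne.symm, ?_⟩
    rw [T.total y x (Ne.symm hne), T'.total y x (Ne.symm hne)]
    simpa using hd
  loopless := ⟨fun x h => h.1 rfl⟩

instance {V : Type*} [DecidableEq V] (T T' : Tournament V) :
    DecidableRel (boolSum T T').Adj :=
  fun x y => inferInstanceAs (Decidable (x ≠ y ∧ T.arc x y ≠ T'.arc x y))

/-- Number of edges of the induced subgraph of `G` on a subset `K`. -/
def edgeCountOn {V : Type*} [Fintype V] [DecidableEq V] (G : SimpleGraph V)
    [DecidableRel G.Adj] (K : Finset V) : ℕ :=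
  (G.edgeFinset.filter (· ∈ K.sym2)).card

/-!
Let `G = T +̇ T'`, fix a set `W` of `k + 2` vertices, and write `e(S)` for the number of edges
of `G` inside `S` and `d(x)` for the degree of `x` in `G[W]`. Removing two vertices `a ≠ b`
from `W` gives, mod 2, `[ab] ≡ e(W \ {a, b}) + e(W) + d(a) + d(b)`, and `e(W \ {a, b})` is even
by hypothesis. Summing over `b ≠ a`, with `|W|` even and the handshake lemma, gives
`d(a) ≡ e(W)`, hence `[ab] ≡ e(W)` for all `a ≠ b` in `W`: `G[W]` is empty or complete. It is
not complete, for then `e(W) = |W| (|W| - 1) / 2` would be odd although `4 ∣ |W|`. Every pair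
of vertices lies in such a `W`, so `G` has no edges, i.e. `T' = T`.
-/
open Finset

namespace SimpleGraph

variable {V : Type*} [DecidableEq V] (G : SimpleGraph V) [DecidableRel G.Adj]

theorem card_filter_adj_insert_self (a : V) (S : Finset V) :
    #{b ∈ insert a S | G.Adj a b} = #{b ∈ S | G.Adj a b} := by
  simp [filter_insert]

theorem card_filter_adj_insert {a b : V} {S : Finset V} (hb : b ∉ S) :
    #{c ∈ insert b S | G.Adj a c} = #{c ∈ S | G.Adj a c} + if G.Adj a b then 1 else 0 := by
  rw [filter_insert]
  split_ifs
  · exact card_insert_of_notMem fun h => hb (mem_filter.1 h).1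
  · rfl

variable [Fintype V]

theorem edgeCountOn_eq_card_filter_sym2 (S : Finset V) :
    edgeCountOn G S = #{e ∈ S.sym2 | e ∈ G.edgeSet} := by
  rw [edgeCountOn, filter_mem_eq_inter, inter_comm, ← filter_mem_eq_inter]
  simp only [mem_edgeFinset]

theorem edgeCountOn_insert {a : V} {S : Finset V} (ha : a ∉ S) :
    edgeCountOn G (insert a S) = edgeCountOn G S + #{b ∈ S | G.Adj a b} := by
  rw [edgeCountOn_eq_card_filter_sym2, edgeCountOn_eq_card_filter_sym2, ← cons_eq_insert _ _ ha,
    sym2_cons, filter_disjUnion, card_disjUnion, filter_map, card_map, add_comm]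
  congr 2
  simp [filter_cons]

theorem two_mul_edgeCountOn (S : Finset V) :
    2 * edgeCountOn G S = ∑ a ∈ S, #{b ∈ S | G.Adj a b} := by
  induction S using Finset.induction_on with
  | empty => simp [edgeCountOn]
  | insert a S ha ih =>
    rw [edgeCountOn_insert G ha, sum_insert ha, card_filter_adj_insert_self]
    simp_rw [card_filter_adj_insert G ha, sum_add_distrib, ← ih, ← natCast_card_filter,
      Nat.cast_id, G.adj_comm _ a]
    ring

theorem ite_adj_eq_edgeCountOn_insert_insert {a b : V} {S : Finset V} (ha : a ∉ S) (hb : b ∉ S)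
    (hab : a ≠ b) :
    (if G.Adj a b then 1 else 0 : ZMod 2) =
      edgeCountOn G S + edgeCountOn G (insert a (insert b S)) +
        #{c ∈ insert a (insert b S) | G.Adj a c} +
          #{c ∈ insert a (insert b S) | G.Adj b c} := by
  have haS : a ∉ insert b S := by simp [hab, ha]
  rw [edgeCountOn_insert G haS, edgeCountOn_insert G hb, card_filter_adj_insert_self,
    insert_comm, card_filter_adj_insert_self, card_filter_adj_insert G hb,
    card_filter_adj_insert G ha]
  simp_rw [G.adj_comm b a]
  split_ifs <;> push_cast <;> ring_nf <;> reduce_mod_char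

theorem adj_iff_odd_edgeCountOn {W : Finset V} (hW : Even #W)
    (h : ∀ K ⊆ W, #K + 2 = #W → Even (edgeCountOn G K))
    {a b : V} (ha : a ∈ W) (hb : b ∈ W) (hab : a ≠ b) :
    G.Adj a b ↔ Odd (edgeCountOn G W) := by
  have two : (2 : ZMod 2) = 0 := rfl
  set e : ZMod 2 := (edgeCountOn G W : ZMod 2)
  set d : V → ZMod 2 := fun x => #{c ∈ W | G.Adj x c}
  have hpair : ∀ x ∈ W, ∀ y ∈ W, x ≠ y →
      (if G.Adj x y then 1 else 0 : ZMod 2) = e + d x + d y := by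
    intro x hx y hy hxy
    set K := (W.erase x).erase y
    have hyK : y ∉ K := notMem_erase y _
    have hxK : x ∉ K := fun h => notMem_erase x W (mem_of_mem_erase h)
    have hW : insert x (insert y K) = W := by
      rw [insert_erase (mem_erase.2 ⟨hxy.symm, hy⟩), insert_erase hx]
    have hK : #K + 2 = #W := by
      rw [← hW, card_insert_of_notMem (by rw [mem_insert]; exact not_or.2 ⟨hxy, hxK⟩),
        card_insert_of_notMem hyK]
    have hKeven : (edgeCountOn G K : ZMod 2) = 0 :=
      (ZMod.natCast_eq_zero_iff_even).2 (h K ((erase_subset _ _).trans (erase_subset _ _)) hK)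
    have := G.ite_adj_eq_edgeCountOn_insert_insert hxK hyK hxy
    rwa [hW, hKeven, zero_add] at this
  have hsum : ∑ x ∈ W, d x = 0 := by
    simp only [d]
    rw [← Nat.cast_sum, ← two_mul_edgeCountOn]
    push_cast
    rw [two, zero_mul]
  have hdeg : ∀ x ∈ W, d x = e := by
    intro x hx
    have hcard : (#(W.erase x) : ZMod 2) = 1 := by
      rw [ZMod.natCast_eq_one_iff_odd, card_erase_of_mem hx]
      exact Nat.Even.sub_odd (card_pos.2 ⟨x, hx⟩) hW odd_one
    calc d x = ∑ y ∈ W.erase x, (if G.Adj x y then 1 else 0 : ZMod 2) := by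
          rw [sum_erase (f := fun y => if G.Adj x y then (1 : ZMod 2) else 0) W
            (if_neg G.irrefl), ← natCast_card_filter]
      _ = ∑ y ∈ W.erase x, (e + d x + d y) :=
          sum_congr rfl fun y hy => hpair x hx y (mem_of_mem_erase hy) (ne_of_mem_erase hy).symm
      _ = e := by
          rw [sum_add_distrib, sum_const, nsmul_eq_mul, hcard, sum_erase_eq_sub hx, hsum]
          ring
  have hab' : (if G.Adj a b then 1 else 0 : ZMod 2) = e := by
    rw [hpair a ha b hb hab, hdeg a ha, hdeg b hb]
    linear_combination e * two
  rw [← ZMod.natCast_eq_one_iff_odd]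
  change _ ↔ e = 1
  rw [← hab']
  split_ifs with hadj <;> simp [hadj]

theorem not_adj_of_card_mod_four_eq_zero {W : Finset V} (hW : #W % 4 = 0)
    (h : ∀ K ⊆ W, #K + 2 = #W → Even (edgeCountOn G K))
    {a b : V} (ha : a ∈ W) (hb : b ∈ W) : ¬G.Adj a b := by
  intro hadj
  have hW2 : Even #W := Nat.even_iff.2 (by omega)
  have hodd := (G.adj_iff_odd_edgeCountOn hW2 h ha hb (G.ne_of_adj hadj)).1 hadj
  have hcomplete : ∀ x ∈ W, #{c ∈ W | G.Adj x c} = #W - 1 := by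
    intro x hx
    rw [← card_erase_of_mem hx]
    congr 1
    ext c
    simp only [mem_filter, mem_erase]
    exact ⟨fun ⟨hc, hxc⟩ => ⟨(G.ne_of_adj hxc).symm, hc⟩,
      fun ⟨hcx, hc⟩ => ⟨hc, (G.adj_iff_odd_edgeCountOn hW2 h hx hc hcx.symm).2 hodd⟩⟩
  have hsum := G.two_mul_edgeCountOn W
  rw [sum_congr rfl hcomplete, sum_const, smul_eq_mul] at hsum
  have h4 : 4 ∣ #W * (#W - 1) := Dvd.dvd.mul_right (Nat.dvd_of_mod_eq_zero hW) _
  rw [Nat.odd_iff] at hodd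
  omega

theorem eq_bot_of_even_edgeCountOn {k : ℕ} (hk : k % 4 = 2) (hkv : k + 2 ≤ Fintype.card V)
    (h : ∀ K : Finset V, #K = k → Even (edgeCountOn G K)) : G = ⊥ := by
  ext a b
  obtain ⟨W, hab, hW⟩ :=
    exists_superset_card_eq (s := {a, b}) (card_le_two.trans (by omega)) hkv
  simpa using G.not_adj_of_card_mod_four_eq_zero (by omega) (fun K _ hK => h K (by omega))
    (hab (mem_insert_self a _)) (hab (by simp))

end SimpleGraph

theorem Tournament.eq_of_boolSum_eq_bot {V : Type*} {T T' : Tournament V}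
    (h : boolSum T T' = ⊥) : T' = T := by
  have harc : T'.arc = T.arc := by
    funext x y
    by_contra hne
    have hadj : (boolSum T T').Adj x y :=
      ⟨fun hxy => hne (by rw [hxy, T.irrefl, T'.irrefl]), Ne.symm hne⟩
    simp [h] at hadj
  cases T
  cases T'
  cases harc
  rfl

theorem tournament_eq_of_boolSum_even_general {V : Type*} [Fintype V] [DecidableEq V]
    (T T' : Tournament V) (k : ℕ)
    (hkv : k + 2 ≤ Fintype.card V) (hk4 : k % 4 = 2)
    (h : ∀ K : Finset V, K.card = k → Even (edgeCountOn (boolSum T T') K)) :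
    T' = T :=
  Tournament.eq_of_boolSum_eq_bot ((boolSum T T').eq_bot_of_even_edgeCountOn hk4 hkv h)

/-- If `k ≡ 2 (mod 4)`, `2 ≤ k ≤ v - 2`, and on every `k`-set the number of edges of
the boolean sum `T +̇ T'` is even, then `T' = T`. -/
theorem tournament_eq_of_boolSum_even {V : Type*} [Fintype V] [DecidableEq V]
    (T T' : Tournament V) (k : ℕ)
    (hk2 : 2 ≤ k) (hkv : k + 2 ≤ Fintype.card V) (hk4 : k % 4 = 2)
    (h : ∀ K : Finset V, K.card = k → Even (edgeCountOn (boolSum T T') K)) :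
    T' = T :=
  tournament_eq_of_boolSum_even_general T T' k hkv hk4 h
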